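/- Let n ∈ ℕ with n ≥ 2 and let m ∈ ℕ with 1 ≤ m ≤ n. Then there exist constants c₁, c₂ > 0 depending only on m and n such that for every measurable function f : (0,1) → [-∞,∞], c₁ · sup_{r ∈ (0,1)} r^{m/n} f^{**}(r) ≤ sup_{r ∈ (0,1)} r^{1/n} ∫_r^1 s^{−1 + (m−1)/n} f^{**}(s) ds ≤ c₂ · sup_{r ∈ (0,1)} r^{m/n} f^{**}(r). -/

import Mathlib

open MeasureTheory ENNReal NNReal Set

/-- The decreasing rearrangement (with respect to Lebesgue measure on `(0,1)`) of a
measurable function `f : (0,1) → [-∞,∞]`: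
`f^*(t) = inf { s ≥ 0 : |{ r ∈ (0,1) : |f(r)| > s }| ≤ t }`. -/
noncomputable def rearr (f : ℝ → EReal) (t : ℝ) : ℝ≥0∞ :=
  sInf {s : ℝ≥0∞ | volume {r : ℝ | r ∈ Set.Ioo (0 : ℝ) 1 ∧ s < (f r).abs} ≤ ENNReal.ofReal t}

/-- The maximal function `f^{**}(t) = (1/t) ∫_0^t f^*(s) ds` for `t > 0`. -/
noncomputable def rearr2 (f : ℝ → EReal) (t : ℝ) : ℝ≥0∞ :=
  (ENNReal.ofReal t)⁻¹ * ∫⁻ s in Set.Ioo (0 : ℝ) t, rearr f s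

lemma rearr_anti (f : ℝ → EReal) : Antitone (rearr f) := by
  intro a b hab
  exact sInf_le_sInf fun s hs => le_trans hs (ENNReal.ofReal_le_ofReal hab)

lemma rearr2_anti (f : ℝ → EReal) {a b : ℝ} (ha : 0 < a) (hab : a ≤ b) :
    rearr2 f b ≤ rearr2 f a := by
  set I₁ := ∫⁻ s in Set.Ioo (0 : ℝ) a, rearr f s with hI₁
  set I₂ := ∫⁻ s in Set.Ico a b, rearr f s with hI₂
  have ha0 : ENNReal.ofReal a ≠ 0 := by
    exact (ENNReal.ofReal_pos.mpr ha).ne'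
  have hsplit : (∫⁻ s in Set.Ioo (0 : ℝ) b, rearr f s) = I₁ + I₂ := by
    rw [← Set.Ioo_union_Ico_eq_Ioo ha hab,
      lintegral_union measurableSet_Ico (by
        rw [Set.disjoint_left]
        rintro x ⟨_, h2⟩ ⟨h3, _⟩
        linarith)]
  have h1 : ENNReal.ofReal a * rearr f a ≤ I₁ := by
    have : (∫⁻ _ in Set.Ioo (0 : ℝ) a, rearr f a) = ENNReal.ofReal a * rearr f a := by
      rw [setLIntegral_const, Real.volume_Ioo, sub_zero, mul_comm]
    rw [← this]
    exact setLIntegral_mono' measurableSet_Ioo fun s hs => rearr_anti f hs.2.le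
  have h2 : I₂ ≤ ENNReal.ofReal (b - a) * rearr f a := by
    have : (∫⁻ _ in Set.Ico a b, rearr f a) = ENNReal.ofReal (b - a) * rearr f a := by
      rw [setLIntegral_const, Real.volume_Ico, mul_comm]
    rw [← this]
    exact setLIntegral_mono' measurableSet_Ico fun s hs => rearr_anti f hs.1
  rw [rearr2, rearr2, hsplit, ← ENNReal.div_eq_inv_mul, ← ENNReal.div_eq_inv_mul]
  rw [ENNReal.div_le_iff (ENNReal.ofReal_pos.mpr (lt_of_lt_of_le ha hab)).ne'
    ENNReal.ofReal_ne_top]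
  have hbsplit : ENNReal.ofReal b = ENNReal.ofReal a + ENNReal.ofReal (b - a) := by
    rw [← ENNReal.ofReal_add ha.le (by linarith)]
    congr 1; ring
  rw [hbsplit, mul_add, ENNReal.div_mul_cancel ha0 ENNReal.ofReal_ne_top]
  refine add_le_add_right ?_ I₁
  calc I₂ ≤ ENNReal.ofReal (b - a) * rearr f a := h2
    _ ≤ ENNReal.ofReal (b - a) * (I₁ / ENNReal.ofReal a) := by
        refine mul_le_mul_right ?_ _
        rw [ENNReal.le_div_iff_mul_le (Or.inl ha0) (Or.inl ENNReal.ofReal_ne_top), mul_comm]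
        exact h1
    _ = I₁ / ENNReal.ofReal a * ENNReal.ofReal (b - a) := mul_comm _ _

/-- Equivalence used to identify the optimal Sobolev domain for `BMO`.
Let `n ≥ 2` and `1 ≤ m ≤ n`.  There are constants `c₁, c₂ > 0` depending only on `m` and `n`
such that for every measurable `f : (0,1) → [-∞,∞]`,
`c₁ sup_{r ∈ (0,1)} r^{m/n} f^{**}(r) ≤ sup_{r ∈ (0,1)} r^{1/n} ∫_r^1 s^{−1+(m−1)/n} f^{**}(s) ds
  ≤ c₂ sup_{r ∈ (0,1)} r^{m/n} f^{**}(r)`. -/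
theorem statement14 (n m : ℕ) (hn : 2 ≤ n) (hm1 : 1 ≤ m) (hmn : m ≤ n) :
    ∃ c₁ c₂ : ℝ, 0 < c₁ ∧ 0 < c₂ ∧
      ∀ f : ℝ → EReal, Measurable f →
        ENNReal.ofReal c₁ *
            (⨆ r ∈ Set.Ioo (0 : ℝ) 1,
              ENNReal.ofReal (r ^ ((m : ℝ) / n)) * rearr2 f r) ≤
          (⨆ r ∈ Set.Ioo (0 : ℝ) 1,
            ENNReal.ofReal (r ^ (1 / (n : ℝ))) *
              ∫⁻ s in Set.Ioo r (1 : ℝ),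
                ENNReal.ofReal (s ^ (-1 + ((m : ℝ) - 1) / n)) * rearr2 f s) ∧
        (⨆ r ∈ Set.Ioo (0 : ℝ) 1,
          ENNReal.ofReal (r ^ (1 / (n : ℝ))) *
            ∫⁻ s in Set.Ioo r (1 : ℝ),
              ENNReal.ofReal (s ^ (-1 + ((m : ℝ) - 1) / n)) * rearr2 f s) ≤
          ENNReal.ofReal c₂ *
            (⨆ r ∈ Set.Ioo (0 : ℝ) 1,
              ENNReal.ofReal (r ^ ((m : ℝ) / n)) * rearr2 f r) := by
  have hn0 : (0 : ℝ) < n := by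
    have : (0 : ℕ) < n := by omega
    exact_mod_cast this
  have hnne : (n : ℝ) ≠ 0 := ne_of_gt hn0
  refine ⟨(1 / 2) * (2 : ℝ) ^ (-(1 / (n : ℝ))), n, by positivity, hn0, ?_⟩
  intro f hf
  set p : ℝ := -1 + ((m : ℝ) - 1) / n with hp
  have hple : p ≤ 0 := by
    rw [hp]
    have h1 : ((m : ℝ) - 1) / n ≤ 1 := by
      rw [div_le_one hn0]
      have : (m : ℝ) ≤ n := by exact_mod_cast hmn
      linarith
    linarith
  set A := ⨆ r ∈ Set.Ioo (0 : ℝ) 1, ENNReal.ofReal (r ^ ((m : ℝ) / n)) * rearr2 f r with hA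
  constructor
  · -- lower bound
    rw [hA]
    simp only [ENNReal.mul_iSup]
    refine iSup₂_le fun r hr => ?_
    have hr2 : r / 2 ∈ Set.Ioo (0 : ℝ) 1 := ⟨by linarith [hr.1], by linarith [hr.2]⟩
    refine le_iSup₂_of_le (r / 2) hr2 ?_
    have key : ENNReal.ofReal (r / 2) * (ENNReal.ofReal (r ^ p) * rearr2 f r)
        ≤ ∫⁻ s in Set.Ioo (r / 2) 1, ENNReal.ofReal (s ^ p) * rearr2 f s := by
      calc ENNReal.ofReal (r / 2) * (ENNReal.ofReal (r ^ p) * rearr2 f r)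
          = ∫⁻ _ in Set.Ioo (r / 2) r, ENNReal.ofReal (r ^ p) * rearr2 f r := by
            rw [setLIntegral_const, Real.volume_Ioo, mul_comm]
            congr 2
            ring
        _ ≤ ∫⁻ s in Set.Ioo (r / 2) r, ENNReal.ofReal (s ^ p) * rearr2 f s := by
            refine setLIntegral_mono' measurableSet_Ioo fun s hs => ?_
            have hs0 : 0 < s := lt_trans (by linarith [hr.1]) hs.1
            exact mul_le_mul'
              (ENNReal.ofReal_le_ofReal (Real.rpow_le_rpow_of_nonpos hs0 hs.2.le hple))
              (rearr2_anti f hs0 hs.2.le)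
        _ ≤ _ := lintegral_mono_set (Set.Ioo_subset_Ioo le_rfl hr.2.le)
    have hsc : (1 / 2 * (2 : ℝ) ^ (-(1 / (n : ℝ)))) * r ^ ((m : ℝ) / n)
        = (r / 2) ^ (1 / (n : ℝ)) * ((r / 2) * r ^ p) := by
      have h2 : (r / 2 : ℝ) = r * (2 : ℝ)⁻¹ := by ring
      rw [h2, Real.mul_rpow hr.1.le (by norm_num),
        Real.inv_rpow (by norm_num : (0:ℝ) ≤ 2), ← Real.rpow_neg (by norm_num : (0:ℝ) ≤ 2)]
      have hrm : r ^ ((m : ℝ) / n) = r ^ (1 / (n : ℝ)) * (r ^ p * r) := by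
        rw [← Real.rpow_add_one (ne_of_gt hr.1) p, ← Real.rpow_add hr.1]
        congr 1
        rw [hp]
        field_simp
        ring
      rw [hrm]
      ring
    have hb1 : (0:ℝ) ≤ 1 / 2 * (2:ℝ) ^ (-(1 / (n:ℝ))) := by positivity
    have hb3 : (0:ℝ) ≤ r / 2 := by linarith [hr.1]
    have hb2 : (0:ℝ) ≤ (r / 2) ^ (1 / (n:ℝ)) := Real.rpow_nonneg hb3 _
    have hE : ENNReal.ofReal (1 / 2 * (2:ℝ) ^ (-(1 / (n:ℝ)))) *
          (ENNReal.ofReal (r ^ ((m:ℝ) / n)) * rearr2 f r)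
        = ENNReal.ofReal ((r / 2) ^ (1 / (n:ℝ))) *
          (ENNReal.ofReal (r / 2) * (ENNReal.ofReal (r ^ p) * rearr2 f r)) := by
      have e1 : ENNReal.ofReal (1 / 2 * (2:ℝ) ^ (-(1 / (n:ℝ)))) *
            ENNReal.ofReal (r ^ ((m:ℝ) / n))
          = ENNReal.ofReal ((r / 2) ^ (1 / (n:ℝ))) *
            (ENNReal.ofReal (r / 2) * ENNReal.ofReal (r ^ p)) := by
        rw [← ENNReal.ofReal_mul hb1, ← ENNReal.ofReal_mul hb3, ← ENNReal.ofReal_mul hb2, hsc]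
      calc ENNReal.ofReal (1 / 2 * (2:ℝ) ^ (-(1 / (n:ℝ)))) *
            (ENNReal.ofReal (r ^ ((m:ℝ) / n)) * rearr2 f r)
          = (ENNReal.ofReal (1 / 2 * (2:ℝ) ^ (-(1 / (n:ℝ)))) *
              ENNReal.ofReal (r ^ ((m:ℝ) / n))) * rearr2 f r := by ring
        _ = (ENNReal.ofReal ((r / 2) ^ (1 / (n:ℝ))) *
              (ENNReal.ofReal (r / 2) * ENNReal.ofReal (r ^ p))) * rearr2 f r := by rw [e1]
        _ = _ := by ring
    rw [hE]
    exact mul_le_mul_right key _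
  · -- upper bound
    by_cases hAtop : A = ⊤
    · rw [hAtop, ENNReal.mul_top (ENNReal.ofReal_pos.mpr hn0).ne']
      exact le_top
    refine iSup₂_le fun r hr => ?_
    have hgs : ∀ s ∈ Set.Ioo (0 : ℝ) 1,
        rearr2 f s ≤ ENNReal.ofReal (s ^ (-((m : ℝ) / n))) * A := by
      intro s hs
      have h1 : ENNReal.ofReal (s ^ ((m : ℝ) / n)) * rearr2 f s ≤ A :=
        le_iSup₂ (f := fun r (_ : r ∈ Set.Ioo (0:ℝ) 1) =>
          ENNReal.ofReal (r ^ ((m : ℝ) / n)) * rearr2 f r) s hs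
      have hppos : (0 : ℝ) < s ^ ((m : ℝ) / n) := Real.rpow_pos_of_pos hs.1 _
      have hne : ENNReal.ofReal (s ^ ((m : ℝ) / n)) ≠ 0 :=
        (ENNReal.ofReal_pos.mpr hppos).ne'
      calc rearr2 f s
          = (ENNReal.ofReal (s ^ ((m : ℝ) / n)))⁻¹ *
              (ENNReal.ofReal (s ^ ((m : ℝ) / n)) * rearr2 f s) := by
            rw [← mul_assoc, ENNReal.inv_mul_cancel hne ENNReal.ofReal_ne_top, one_mul]
        _ ≤ (ENNReal.ofReal (s ^ ((m : ℝ) / n)))⁻¹ * A := mul_le_mul_right h1 _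
        _ = ENNReal.ofReal (s ^ (-((m : ℝ) / n))) * A := by
            rw [Real.rpow_neg hs.1.le, ENNReal.ofReal_inv_of_pos hppos]
    have hq : (-1 - 1 / (n : ℝ)) + 1 = -(1 / (n : ℝ)) := by ring
    have h0not : (0 : ℝ) ∉ Set.uIcc r 1 := by
      rw [Set.uIcc_of_le hr.2.le]
      exact fun h => absurd h.1 (not_le.mpr hr.1)
    have hInt : IntegrableOn (fun s : ℝ => s ^ (-1 - 1 / (n : ℝ))) (Set.Ioo r 1) volume := by
      have := (intervalIntegral.intervalIntegrable_rpow
        (μ := volume) (r := -1 - 1 / (n : ℝ)) (a := r) (b := 1) (Or.inr h0not)).1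
      exact this.mono_set Set.Ioo_subset_Ioc_self
    have heq : (∫ s in Set.Ioo r 1, s ^ (-1 - 1 / (n : ℝ)))
        = ((1 : ℝ) ^ (-(1 / (n : ℝ))) - r ^ (-(1 / (n : ℝ)))) / (-(1 / (n : ℝ))) := by
      have hne1 : (-1 - 1 / (n : ℝ)) ≠ -1 := by
        have h1n : (0 : ℝ) < 1 / n := by positivity
        intro h; linarith
      rw [← integral_Ioc_eq_integral_Ioo, ← intervalIntegral.integral_of_le hr.2.le,
        integral_rpow (Or.inr ⟨hne1, h0not⟩), hq]
    have hval : (∫ s in Set.Ioo r 1, s ^ (-1 - 1 / (n : ℝ)))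
        ≤ (n : ℝ) * r ^ (-(1 / (n : ℝ))) := by
      rw [heq, Real.one_rpow]
      have hrn : (0 : ℝ) ≤ r ^ (-(1 / (n : ℝ))) := Real.rpow_nonneg hr.1.le _
      have : (1 - r ^ (-(1 / (n : ℝ)))) / (-(1 / (n : ℝ)))
          = (n : ℝ) * r ^ (-(1 / (n : ℝ))) - n := by
        field_simp
        ring
      rw [this]
      linarith
    have hint1 : (∫⁻ s in Set.Ioo r 1, ENNReal.ofReal (s ^ (-1 - 1 / (n : ℝ))))
        ≤ ENNReal.ofReal ((n : ℝ) * r ^ (-(1 / (n : ℝ)))) := by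
      rw [← ofReal_integral_eq_lintegral_ofReal hInt
        (Filter.Eventually.mono (ae_restrict_mem measurableSet_Ioo)
          fun s hs => Real.rpow_nonneg (le_of_lt (lt_trans hr.1 hs.1)) _)]
      exact ENNReal.ofReal_le_ofReal hval
    have hmain : (∫⁻ s in Set.Ioo r 1, ENNReal.ofReal (s ^ p) * rearr2 f s)
        ≤ ENNReal.ofReal ((n : ℝ) * r ^ (-(1 / (n : ℝ)))) * A := by
      calc (∫⁻ s in Set.Ioo r 1, ENNReal.ofReal (s ^ p) * rearr2 f s)
          ≤ ∫⁻ s in Set.Ioo r 1, ENNReal.ofReal (s ^ (-1 - 1 / (n : ℝ))) * A := by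
            refine setLIntegral_mono' measurableSet_Ioo fun s hs => ?_
            have hs0 : 0 < s := lt_trans hr.1 hs.1
            calc ENNReal.ofReal (s ^ p) * rearr2 f s
                ≤ ENNReal.ofReal (s ^ p) * (ENNReal.ofReal (s ^ (-((m : ℝ) / n))) * A) :=
                  mul_le_mul_right (hgs s ⟨hs0, hs.2⟩) _
              _ = ENNReal.ofReal (s ^ p * s ^ (-((m : ℝ) / n))) * A := by
                  rw [ENNReal.ofReal_mul (Real.rpow_nonneg hs0.le _), mul_assoc]
              _ = ENNReal.ofReal (s ^ (-1 - 1 / (n : ℝ))) * A := by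
                  rw [← Real.rpow_add hs0]
                  congr 2
                  rw [hp]
                  field_simp
                  ring
        _ = (∫⁻ s in Set.Ioo r 1, ENNReal.ofReal (s ^ (-1 - 1 / (n : ℝ)))) * A :=
            lintegral_mul_const' A _ hAtop
        _ ≤ _ := mul_le_mul_left hint1 _
    calc ENNReal.ofReal (r ^ (1 / (n : ℝ))) *
          ∫⁻ s in Set.Ioo r 1, ENNReal.ofReal (s ^ p) * rearr2 f s
        ≤ ENNReal.ofReal (r ^ (1 / (n : ℝ))) *
            (ENNReal.ofReal ((n : ℝ) * r ^ (-(1 / (n : ℝ)))) * A) := mul_le_mul_right hmain _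
      _ = ENNReal.ofReal (n : ℝ) * A := by
          rw [← mul_assoc, ← ENNReal.ofReal_mul (Real.rpow_nonneg hr.1.le _)]
          congr 2
          rw [show r ^ (1 / (n : ℝ)) * ((n : ℝ) * r ^ (-(1 / (n : ℝ))))
              = (n : ℝ) * (r ^ (1 / (n : ℝ)) * r ^ (-(1 / (n : ℝ)))) from by ring,
            ← Real.rpow_add hr.1]
          simp
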